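/- arXiv:1211.3378 — 4 statements merged into one kernel-verified Lean document; each statement's English description precedes it below -/
import Mathlib

section
/- Let T be a minimal nontrivial R-tree with an isometric action of a countable group G such that every G-orbit is dense in T and T contains at least one branch point. Then T is not a complete metric space. -/
open Pointwise

/-- The segment `[x,y]` in a metric space (in an `ℝ`-tree this is the arc from `x` to `y`). -/
def seg {T : Type*} [MetricSpace T] (x y : T) : Set T :=
  {z : T | dist x z + dist z y = dist x y}

/-- An `ℝ`-tree: a geodesic metric space that is `0`-hyperbolic (four-point condition),
equivalently any two points are joined by a unique arc, isometric to a real interval. -/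
def IsRTree (T : Type*) [MetricSpace T] : Prop :=
  (∀ x y : T, ∃ f : ℝ → T, f 0 = x ∧ f (dist x y) = y ∧
      ∀ s ∈ Set.Icc (0 : ℝ) (dist x y), ∀ t ∈ Set.Icc (0 : ℝ) (dist x y),
        dist (f s) (f t) = |s - t|) ∧
  ∀ x y z w : T, dist x y + dist z w ≤ max (dist x z + dist y w) (dist x w + dist y z)

/-- A subtree: a convex subset. -/
def IsSubtree {T : Type*} [MetricSpace T] (Y : Set T) : Prop :=
  ∀ x ∈ Y, ∀ y ∈ Y, seg x y ⊆ Y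

/-- An arc: a subset isometric to a nondegenerate closed real interval. -/
def IsArc {T : Type*} [MetricSpace T] (A : Set T) : Prop :=
  ∃ (a b : ℝ) (f : ℝ → T), a < b ∧
    (∀ s ∈ Set.Icc a b, ∀ t ∈ Set.Icc a b, dist (f s) (f t) = |s - t|) ∧
    A = f '' Set.Icc a b

/-- A transverse family: a `G`-invariant collection of nondegenerate subtrees, any two
distinct members of which intersect in at most one point. -/
structure IsTransverseFamily (G : Type*) {T : Type*} [Group G] [MulAction G T]
    [MetricSpace T] (F : Set (Set T)) : Prop where
  invariant : ∀ (g : G), ∀ Y ∈ F, g • Y ∈ F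
  subtree : ∀ Y ∈ F, IsSubtree Y
  nondeg : ∀ Y ∈ F, ¬Y.Subsingleton
  transverse : ∀ Y ∈ F, ∀ Y' ∈ F, Y ≠ Y' → (Y ∩ Y').Subsingleton

/-- A minimal action: no proper nonempty invariant subtree. -/
def IsMinimalAction (G : Type*) (T : Type*) [Group G] [MulAction G T] [MetricSpace T] : Prop :=
  ∀ Y : Set T, Y.Nonempty → IsSubtree Y → (∀ g : G, g • Y = Y) → Y = Set.univ

/-- A branch point: a point whose removal leaves at least three connected components. -/
def IsBranchPoint {T : Type*} [MetricSpace T] (x : T) : Prop :=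
  ∃ y z w : T, y ≠ x ∧ z ≠ x ∧ w ≠ x ∧
    connectedComponentIn {x}ᶜ y ≠ connectedComponentIn {x}ᶜ z ∧
    connectedComponentIn {x}ᶜ y ≠ connectedComponentIn {x}ᶜ w ∧
    connectedComponentIn {x}ᶜ z ≠ connectedComponentIn {x}ᶜ w

/-!
The set of branch points is invariant, so one dense orbit of a branch point makes branch points
dense. A segment `[a, b]` contains no ball around a branch point `q`: each of the (at least three)
directions at `q` enters every ball around `q`, while `[a, b] \ {q}` lies in the two directions of
its halves. So segments are closed with empty interior. By minimality, `T` is the union of the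
countably many segments joining points of one orbit, which Baire's theorem forbids when `T` is
complete.
-/

open Set Metric

/-- `IsRTree T` unfolds to `(∀ x y, ∃ f, IsGeodesic f x y) ∧ IsZeroHyperbolic T`. -/
def IsZeroHyperbolic (T : Type*) [MetricSpace T] : Prop :=
  ∀ x y z w : T, dist x y + dist z w ≤ max (dist x z + dist y w) (dist x w + dist y z)

def IsGeodesic {T : Type*} [MetricSpace T] (f : ℝ → T) (x y : T) : Prop :=
  f 0 = x ∧ f (dist x y) = y ∧
    ∀ s ∈ Icc (0 : ℝ) (dist x y), ∀ t ∈ Icc (0 : ℝ) (dist x y),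
      dist (f s) (f t) = |s - t|

section Segments

variable {T : Type*} [MetricSpace T]

lemma isClosed_seg (x y : T) : IsClosed (seg x y) :=
  isClosed_eq (by fun_prop) continuous_const

lemma left_mem_seg (x y : T) : x ∈ seg x y := by
  simp [seg]

lemma seg_comm (x y : T) : seg x y = seg y x := by
  ext z
  simp only [seg, mem_ofPred_eq, dist_comm, add_comm]

lemma seg_subset_seg_of_mem {a b q : T} (hq : q ∈ seg a b) : seg a q ⊆ seg a b := by
  intro z hz
  simp only [seg, mem_ofPred_eq] at *
  linarith [dist_triangle z q b, dist_triangle a z b]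

lemma Isometry.mapsTo_seg {T' : Type*} [MetricSpace T'] {φ : T → T'} (hφ : Isometry φ)
    (x y : T) : MapsTo φ (seg x y) (seg (φ x) (φ y)) := by
  intro z hz
  simpa only [seg, mem_ofPred_eq, hφ.dist_eq] using hz

lemma IsZeroHyperbolic.seg_subset_union (h : IsZeroHyperbolic T) (p q r : T) :
    seg p q ⊆ seg p r ∪ seg r q := by
  intro z hz
  simp only [seg, mem_union, mem_ofPred_eq] at hz ⊢
  rcases le_max_iff.1 (h z r p q) with h' | h'
  · right
    linarith [dist_triangle r z q, dist_comm z r, dist_comm p z]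
  · left
    linarith [dist_triangle p z r, dist_comm r p, dist_comm z q]

namespace IsGeodesic

variable {f : ℝ → T} {x y : T}

lemma dist_left (hf : IsGeodesic f x y) {s : ℝ} (hs : s ∈ Icc 0 (dist x y)) :
    dist x (f s) = s := by
  rw [← hf.1, hf.2.2 0 ⟨le_rfl, dist_nonneg⟩ s hs, zero_sub, abs_neg, abs_of_nonneg hs.1]

lemma dist_right (hf : IsGeodesic f x y) {s : ℝ} (hs : s ∈ Icc 0 (dist x y)) :
    dist (f s) y = dist x y - s := by
  conv_lhs => rw [← hf.2.1]
  rw [hf.2.2 s hs _ ⟨dist_nonneg, le_rfl⟩, abs_of_nonpos (by linarith [hs.2])]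
  ring

lemma continuousOn (hf : IsGeodesic f x y) : ContinuousOn f (Icc 0 (dist x y)) :=
  continuousOn_iff_continuous_domRestrict.2 <| Isometry.continuous <| Isometry.of_dist_eq
    fun s t => by rw [Subtype.dist_eq, Real.dist_eq]; exact hf.2.2 s s.2 t t.2

lemma injOn (hf : IsGeodesic f x y) : InjOn f (Icc 0 (dist x y)) := fun s hs t ht hst => by
  have := hf.2.2 s hs t ht
  rw [hst, dist_self, eq_comm, abs_eq_zero, sub_eq_zero] at this
  exact this

end IsGeodesic

/-- The point at distance `dist x z` from `x` on the geodesic is, by the four-point condition, at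
distance `0` from `z`. -/
lemma IsZeroHyperbolic.seg_subset_image (h : IsZeroHyperbolic T) {f : ℝ → T} {x y : T}
    (hf : IsGeodesic f x y) : seg x y ⊆ f '' Icc 0 (dist x y) := by
  intro z hz
  simp only [seg, mem_ofPred_eq] at hz
  have hs : dist x z ∈ Icc 0 (dist x y) :=
    ⟨dist_nonneg, by linarith [dist_nonneg (x := z) (y := y)]⟩
  have h4 := h (f (dist x z)) z x y
  rw [dist_comm _ x, hf.dist_left hs, hf.dist_right hs, dist_comm z x] at h4
  have : dist (f (dist x z)) z ≤ 0 := by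
    rcases le_max_iff.1 h4 with h4 | h4 <;> linarith
  exact ⟨dist x z, hs, dist_le_zero.1 this⟩

end Segments

lemma image_Icc_diff_subset_connectedComponentIn_union {X : Type*} [TopologicalSpace X]
    {f : ℝ → X} {a b s : ℝ} (hf : ContinuousOn f (Icc a b)) (hinj : InjOn f (Icc a b))
    (hs : s ∈ Icc a b) :
    f '' Icc a b \ {f s} ⊆
      connectedComponentIn {f s}ᶜ (f a) ∪ connectedComponentIn {f s}ᶜ (f b) := by
  rintro _ ⟨⟨u, hu, rfl⟩, hus⟩
  have hus' : u ≠ s := fun h => hus (h ▸ rfl)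
  have avoid : ∀ I ⊆ Icc a b, s ∉ I → f '' I ⊆ {f s}ᶜ := by
    rintro I hI hsI _ ⟨t, ht, rfl⟩ (hts : f t = f s)
    exact hsI (hinj (hI ht) hs hts ▸ ht)
  rcases lt_or_gt_of_ne hus' with hlt | hgt
  · have hI : Icc a u ⊆ Icc a b := Icc_subset_Icc le_rfl hu.2
    exact Or.inl <| (isPreconnected_Icc.image f (hf.mono hI)).subset_connectedComponentIn
      ⟨a, left_mem_Icc.2 hu.1, rfl⟩ (avoid _ hI fun h => hlt.not_ge h.2)
      ⟨u, right_mem_Icc.2 hu.1, rfl⟩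
  · have hI : Icc u b ⊆ Icc a b := Icc_subset_Icc hu.1 le_rfl
    exact Or.inr <| (isPreconnected_Icc.image f (hf.mono hI)).subset_connectedComponentIn
      ⟨b, right_mem_Icc.2 hu.2, rfl⟩ (avoid _ hI fun h => hgt.not_ge h.1)
      ⟨u, left_mem_Icc.2 hu.2, rfl⟩

lemma IsBranchPoint.map_homeomorph {T T' : Type*} [MetricSpace T] [MetricSpace T'] {x : T}
    (hx : IsBranchPoint x) (φ : T ≃ₜ T') : IsBranchPoint (φ x) := by
  obtain ⟨y, z, w, hy, hz, hw, hyz, hyw, hzw⟩ := hx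
  have hcomp : ∀ a, a ≠ x →
      connectedComponentIn {φ x}ᶜ (φ a) = φ '' connectedComponentIn {x}ᶜ a := fun a ha => by
    rw [φ.image_connectedComponentIn (mem_compl_singleton_iff.2 ha), image_compl_eq φ.bijective,
      image_singleton]
  refine ⟨φ y, φ z, φ w, φ.injective.ne hy, φ.injective.ne hz, φ.injective.ne hw,
    ?_, ?_, ?_⟩
  · rw [hcomp y hy, hcomp z hz]; exact (image_injective.2 φ.injective).ne hyz
  · rw [hcomp y hy, hcomp w hw]; exact (image_injective.2 φ.injective).ne hyw
  · rw [hcomp z hz, hcomp w hw]; exact (image_injective.2 φ.injective).ne hzw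

lemma dense_setOf_isBranchPoint {G T : Type*} [Group G] [MetricSpace T] [MulAction G T]
    [ContinuousConstSMul G T] {x : T} (hx : IsBranchPoint x)
    (hdense : Dense (MulAction.orbit G x)) : Dense {y : T | IsBranchPoint y} :=
  hdense.mono <| by
    rintro _ ⟨g, rfl⟩
    exact hx.map_homeomorph (Homeomorph.smul g)

section RTree

variable {T : Type*} [MetricSpace T]

lemma IsGeodesic.exists_mem_ball_mem_connectedComponentIn {f : ℝ → T} {q v : T}
    (hf : IsGeodesic f q v) (hv : v ≠ q) {δ : ℝ} (hδ : 0 < δ) :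
    ∃ p ∈ ball q δ, p ∈ connectedComponentIn {q}ᶜ v := by
  have hD : 0 < dist q v := dist_pos.2 hv.symm
  have hsub : f '' Ioc 0 (dist q v) ⊆ connectedComponentIn {q}ᶜ v := by
    refine (isPreconnected_Ioc.image f (hf.continuousOn.mono Ioc_subset_Icc_self)
      ).subset_connectedComponentIn ⟨_, ⟨hD, le_rfl⟩, hf.2.1⟩ ?_
    rintro _ ⟨t, ht, rfl⟩ (hq : f t = q)
    have := hf.dist_left (Ioc_subset_Icc_self ht)
    rw [hq, dist_self] at this
    exact ht.1.ne this
  have ht : min (δ / 2) (dist q v) ∈ Ioc 0 (dist q v) :=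
    ⟨lt_min (half_pos hδ) hD, min_le_right _ _⟩
  refine ⟨_, ?_, hsub ⟨_, ht, rfl⟩⟩
  rw [mem_ball', hf.dist_left (Ioc_subset_Icc_self ht)]
  exact (min_le_left _ _).trans_lt (half_lt_self hδ)

lemma IsRTree.not_ball_subset_seg (hT : IsRTree T) {q : T} (hq : IsBranchPoint q) {δ : ℝ}
    (hδ : 0 < δ) (a b : T) : ¬ball q δ ⊆ seg a b := by
  intro hball
  obtain ⟨f, hf⟩ : ∃ f, IsGeodesic f a b := hT.1 a b
  have hseg := IsZeroHyperbolic.seg_subset_image hT.2 hf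
  obtain ⟨s, hs, rfl⟩ := hseg (hball (mem_ball_self hδ))
  have two_sides : ∀ v, v ≠ f s →
      connectedComponentIn {f s}ᶜ v = connectedComponentIn {f s}ᶜ (f 0) ∨
        connectedComponentIn {f s}ᶜ v = connectedComponentIn {f s}ᶜ (f (dist a b)) := by
    intro v hv
    obtain ⟨g, hg⟩ : ∃ g, IsGeodesic g (f s) v := hT.1 (f s) v
    obtain ⟨p, hpq, hpv⟩ := IsGeodesic.exists_mem_ball_mem_connectedComponentIn hg hv hδ
    rw [connectedComponentIn_eq hpv]
    rcases image_Icc_diff_subset_connectedComponentIn_union hf.continuousOn hf.injOn hs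
      ⟨hseg (hball hpq), connectedComponentIn_subset _ _ hpv⟩ with h | h
    exacts [Or.inl (connectedComponentIn_eq h).symm, Or.inr (connectedComponentIn_eq h).symm]
  obtain ⟨y, z, w, hy, hz, hw, hyz, hyw, hzw⟩ := hq
  rcases two_sides y hy with h₁ | h₁ <;> rcases two_sides z hz with h₂ | h₂ <;>
    rcases two_sides w hw with h₃ | h₃ <;> simp_all

lemma IsRTree.interior_seg_eq_empty (hT : IsRTree T) (hbr : Dense {x : T | IsBranchPoint x})
    (a b : T) : interior (seg a b) = ∅ := by
  by_contra! hne
  obtain ⟨q, hbq, hq⟩ := hbr.exists_mem_open isOpen_interior hne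
  obtain ⟨δ, hδ, hball⟩ := isOpen_iff.1 isOpen_interior q hq
  exact hT.not_ball_subset_seg hbq hδ a b (hball.trans interior_subset)

variable {G : Type*} [Group G] [MulAction G T]

lemma isSubtree_iUnion_seg_orbit (h : IsZeroHyperbolic T) (x : T) :
    IsSubtree (⋃ p : G × G, seg (p.1 • x) (p.2 • x)) := by
  rintro u hu v hv z hz
  obtain ⟨⟨g₁, k₁⟩, hu⟩ := mem_iUnion.1 hu
  obtain ⟨⟨g₂, k₂⟩, hv⟩ := mem_iUnion.1 hv
  refine mem_iUnion.2 ?_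
  rcases h.seg_subset_union u v (g₂ • x) hz with hz | hz
  · rcases h.seg_subset_union u (g₂ • x) (g₁ • x) hz with hz | hz
    · exact ⟨(g₁, k₁), seg_subset_seg_of_mem hu (by rwa [seg_comm])⟩
    · exact ⟨(g₁, g₂), hz⟩
  · exact ⟨(g₂, k₂), seg_subset_seg_of_mem hv hz⟩

lemma smul_iUnion_seg_orbit (hiso : ∀ g : G, Isometry fun x : T => g • x) (g : G) (x : T) :
    g • ⋃ p : G × G, seg (p.1 • x) (p.2 • x) =
      ⋃ p : G × G, seg (p.1 • x) (p.2 • x) := by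
  have hsub : ∀ g : G, g • ⋃ p : G × G, seg (p.1 • x) (p.2 • x) ⊆
      ⋃ p : G × G, seg (p.1 • x) (p.2 • x) := by
    intro g
    rw [smul_set_iUnion]
    refine iUnion_mono' fun p => ⟨(g * p.1, g * p.2), ?_⟩
    rw [mul_smul, mul_smul]
    exact ((hiso g).mapsTo_seg _ _).image_subset
  exact (hsub g).antisymm (subset_smul_set_iff.2 (hsub g⁻¹))

lemma iUnion_seg_orbit_eq_univ (h : IsZeroHyperbolic T)
    (hiso : ∀ g : G, Isometry fun x : T => g • x)
    (hmin : IsMinimalAction G T) (x : T) : ⋃ p : G × G, seg (p.1 • x) (p.2 • x) = univ :=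
  hmin _ ⟨x, mem_iUnion.2 ⟨(1, 1), by simpa using left_mem_seg x x⟩⟩
    (isSubtree_iUnion_seg_orbit h x) (smul_iUnion_seg_orbit hiso · x)

end RTree

theorem not_completeSpace_of_minimal_denseOrbits_branchPoint_general
    {T G : Type*} [MetricSpace T] [Group G] [Countable G] [MulAction G T]
    (hT : IsRTree T) (hiso : ∀ g : G, Isometry fun x : T => g • x)
    (hmin : IsMinimalAction G T)
    (hdense : ∀ x : T, Dense (MulAction.orbit G x : Set T))
    (hbranch : ∃ x : T, IsBranchPoint x) :
    ¬CompleteSpace T := by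
  intro hcomplete
  obtain ⟨x, hx⟩ := hbranch
  have : Nonempty T := ⟨x⟩
  have : ContinuousConstSMul G T := ⟨fun g => (hiso g).continuous⟩
  have hbr : Dense {y : T | IsBranchPoint y} := dense_setOf_isBranchPoint hx (hdense x)
  obtain ⟨p, hp⟩ := nonempty_interior_of_iUnion_of_closed (fun p : G × G => isClosed_seg _ _)
    (iUnion_seg_orbit_eq_univ hT.2 hiso hmin x)
  exact hp.ne_empty (hT.interior_seg_eq_empty hbr _ _)

/-- A minimal nontrivial `ℝ`-tree with an isometric action of a countable group with dense
orbits and containing a branch point is not complete. -/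
theorem not_completeSpace_of_minimal_denseOrbits_branchPoint
    {T G : Type*} [MetricSpace T] [Group G] [Countable G] [MulAction G T]
    (hT : IsRTree T) (hiso : ∀ g : G, Isometry fun x : T => g • x)
    (hmin : IsMinimalAction G T) (hnontriv : ∃ x y : T, x ≠ y)
    (hdense : ∀ x : T, Dense (MulAction.orbit G x : Set T))
    (hbranch : ∃ x : T, IsBranchPoint x) :
    ¬CompleteSpace T :=
  not_completeSpace_of_minimal_denseOrbits_branchPoint_general hT hiso hmin hdense hbranch
end

section
/- Let F and F' be free factors of a finitely generated free group F_N. Then F ∩ F' is a free factor of both F and F'. -/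
/-- `A` is a free factor of `B`: `A ≤ B` and there is `K ≤ B` such that `B` is the internal
free product of `A` and `K` (the natural map from the free product `A ∗ K` to `B` is an
isomorphism). -/
def IsFreeFactorOf {G : Type*} [Group G] (A B : Subgroup G) : Prop :=
  ∃ (h : A ≤ B) (K : Subgroup G) (hK : K ≤ B),
    Function.Bijective ⇑(Monoid.Coprod.lift (Subgroup.inclusion h) (Subgroup.inclusion hK))

/-!
Both claims are instances of a special case of the Kurosh subgroup theorem: if `f : β → α` and
`A` is the subgroup of `FreeGroup α` generated by the letters `f b`, then `A ⊓ H` is a free factor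
of every subgroup `H`. Let the free group act on the cosets of `H` and pick a Schreier transversal,
i.e. a spanning tree of the Schreier graph rooted at the trivial coset, built so that the `A`-orbit
of the root is reached through letters `f b` only. The nontrivial Schreier generators form a free
basis of `H` (injectivity is read off the Reidemeister–Schreier rewriting process), and those on
the edges labelled `f b` inside the `A`-orbit generate exactly `A ⊓ H`. A free factor `F` of a free
group becomes such an `A` in a basis obtained from bases of `F` and of a complement.
-/

open Function Monoid MulAction Subgroup
open scoped Monoid.Coprod

theorem Monoid.Coprod.map_surjective {M N M' N' : Type*} [Monoid M] [Monoid N] [Monoid M']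
    [Monoid N'] {f : M →* M'} {g : N →* N'} (hf : Surjective f) (hg : Surjective g) :
    Surjective (Coprod.map f g) := by
  intro x
  induction x using Coprod.induction_on with
  | inl a => obtain ⟨a, rfl⟩ := hf a; exact ⟨Coprod.inl a, rfl⟩
  | inr b => obtain ⟨b, rfl⟩ := hg b; exact ⟨Coprod.inr b, rfl⟩
  | mul x y hx hy =>
    obtain ⟨x, rfl⟩ := hx
    obtain ⟨y, rfl⟩ := hy
    exact ⟨x * y, map_mul _ _ _⟩

namespace FreeGroup

variable {S T : Type*}

def sumEquivCoprod : FreeGroup (S ⊕ T) ≃* FreeGroup S ∗ FreeGroup T :=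
  MonoidHom.toMulEquiv
    (FreeGroup.lift (Sum.elim (Coprod.inl ∘ of) (Coprod.inr ∘ of)))
    (Coprod.lift (map Sum.inl) (map Sum.inr))
    (ext_hom _ _ fun a ↦ by cases a <;> rfl)
    (Coprod.hom_ext (ext_hom _ _ fun _ ↦ rfl) (ext_hom _ _ fun _ ↦ rfl))

end FreeGroup

section FreeFactor

variable {G M N : Type*} [Group G] [Group M] [Group N]

theorem isFreeFactorOf_range_comp_inl (φ : M ∗ N →* G) (hφ : Injective φ) :
    IsFreeFactorOf (φ.comp Coprod.inl).range φ.range := by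
  have hA : (φ.comp Coprod.inl).range ≤ φ.range := by
    rw [MonoidHom.range_comp]; exact Subgroup.map_le_range _ _
  have hK : (φ.comp Coprod.inr).range ≤ φ.range := by
    rw [MonoidHom.range_comp]; exact Subgroup.map_le_range _ _
  refine ⟨hA, _, hK, ?_⟩
  set m := Coprod.map (φ.comp Coprod.inl).rangeRestrict (φ.comp Coprod.inr).rangeRestrict
  have hm : Surjective m :=
    Coprod.map_surjective (MonoidHom.rangeRestrict_surjective _)
      (MonoidHom.rangeRestrict_surjective _)
  have hcomp : (Coprod.lift (Subgroup.inclusion hA) (Subgroup.inclusion hK)).comp m =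
      φ.rangeRestrict := by
    ext <;> rfl
  have hφ' : Bijective φ.rangeRestrict :=
    ⟨MonoidHom.rangeRestrict_injective_iff.mpr hφ, MonoidHom.rangeRestrict_surjective φ⟩
  rw [← hcomp, MonoidHom.coe_comp] at hφ'
  exact (Bijective.of_comp_iff _ ⟨hφ'.1.of_comp, hm⟩).mp hφ'

theorem IsFreeFactorOf.exists_coprod {A B : Subgroup G} (h : IsFreeFactorOf A B) :
    ∃ (K : Subgroup G) (φ : A ∗ K →* G),
      Injective φ ∧ (φ.comp Coprod.inl).range = A ∧ φ.range = B := by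
  obtain ⟨hA, K, hK, hbij⟩ := h
  refine ⟨K, B.subtype.comp (Coprod.lift (Subgroup.inclusion hA) (Subgroup.inclusion hK)),
    B.subtype_injective.comp hbij.1, ?_, ?_⟩
  · rw [MonoidHom.comp_assoc, Coprod.lift_comp_inl, Subgroup.subtype_comp_inclusion,
      Subgroup.range_subtype]
  · rw [MonoidHom.range_comp, MonoidHom.range_eq_top.mpr hbij.2, ← MonoidHom.range_eq_map,
      Subgroup.range_subtype]

theorem IsFreeFactorOf.map {G' : Type*} [Group G'] {A B : Subgroup G} (h : IsFreeFactorOf A B)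
    (e : G →* G') (he : Injective e) : IsFreeFactorOf (A.map e) (B.map e) := by
  obtain ⟨K, φ, hφ, hA, hB⟩ := h.exists_coprod
  rw [← hA, ← hB, MonoidHom.map_range, MonoidHom.map_range, ← MonoidHom.comp_assoc]
  exact isFreeFactorOf_range_comp_inl (e.comp φ) (he.comp hφ)

theorem isFreeFactorOf_range_comp_map_subtypeVal {E : Type*} (μ : FreeGroup E →* G)
    (hμ : Injective μ) (P : E → Prop) :
    IsFreeFactorOf (μ.comp (FreeGroup.map (Subtype.val : {e // P e} → E))).range μ.range := by
  classical
  let e := (FreeGroup.freeGroupCongr (Equiv.sumCompl P).symm).trans FreeGroup.sumEquivCoprod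
  have h := isFreeFactorOf_range_comp_inl (μ.comp e.symm.toMonoidHom) (hμ.comp e.symm.injective)
  have h₁ : (μ.comp e.symm.toMonoidHom).comp Coprod.inl = μ.comp (FreeGroup.map Subtype.val) :=
    FreeGroup.ext_hom _ _ fun _ ↦ rfl
  have h₂ : (μ.comp e.symm.toMonoidHom).range = μ.range := by
    rw [MonoidHom.range_comp, MonoidHom.range_eq_top.mpr e.symm.surjective,
      ← MonoidHom.range_eq_map]
  rwa [h₁, h₂] at h

end FreeFactor

namespace FreeGroup

variable {α β X : Type*}

def IsLetter (ℓ : FreeGroup α) : Prop := ∃ a, ℓ = of a ∨ ℓ = (of a)⁻¹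

theorem IsLetter.map {ℓ : FreeGroup β} (hℓ : IsLetter ℓ) (f : β → α) : IsLetter (map f ℓ) := by
  obtain ⟨b, rfl | rfl⟩ := hℓ
  exacts [⟨f b, .inl (map.of)⟩, ⟨f b, .inr (by rw [_root_.map_inv, map.of])⟩]

theorem exists_isLetter_mul_norm_lt [DecidableEq α] {w : FreeGroup α} (hw : w ≠ 1) :
    ∃ ℓ w', IsLetter ℓ ∧ w = ℓ * w' ∧ norm w' < norm w := by
  obtain ⟨p, tail, hpt⟩ := List.ne_nil_iff_exists_cons.mp (mt toWord_eq_nil_iff.mp hw)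
  refine ⟨mk [p], mk tail, ⟨p.1, ?_⟩, ?_, ?_⟩
  · obtain ⟨a, _ | _⟩ := p
    exacts [.inr rfl, .inl rfl]
  · rw [mul_mk, List.singleton_append, ← hpt, mk_toWord]
  · calc norm (mk tail) ≤ tail.length := norm_mk_le
      _ < (p :: tail).length := Nat.lt_succ_self _
      _ = norm w := by rw [← hpt]; rfl

section WordDist

variable [MulAction (FreeGroup α) X] (f : β → α) (x₀ : X)

def mapOrbit : Set X := Set.range fun w : FreeGroup β ↦ map f w • x₀

theorem smul_mem_mapOrbit {y : X} (hy : y ∈ mapOrbit f x₀) (w : FreeGroup β) :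
    map f w • y ∈ mapOrbit f x₀ := by
  obtain ⟨v, rfl⟩ := hy
  exact ⟨w * v, by simp only [_root_.map_mul, mul_smul]⟩

open scoped Classical in
noncomputable def wordDist (x : X) : ℕ := sInf (norm '' {w : FreeGroup β | map f w • x₀ = x})

theorem exists_isLetter_wordDist_lt {x : X} (hx : x ∈ mapOrbit f x₀) (hne : x ≠ x₀) :
    ∃ ℓ : FreeGroup β, IsLetter ℓ ∧ wordDist f x₀ (map f ℓ⁻¹ • x) < wordDist f x₀ x := by
  classical
  obtain ⟨w, hw, hmin⟩ : sInf (norm '' {w : FreeGroup β | map f w • x₀ = x}) ∈ _ :=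
    Nat.sInf_mem (let ⟨w, hw⟩ := hx; ⟨_, w, hw, rfl⟩)
  replace hw : map f w • x₀ = x := hw
  have hw1 : w ≠ 1 := by
    rintro rfl
    exact hne (by simpa using hw.symm)
  obtain ⟨ℓ, w', hℓ, rfl, hlt⟩ := exists_isLetter_mul_norm_lt hw1
  refine ⟨ℓ, hℓ, ?_⟩
  have hy : map f w' • x₀ = map f ℓ⁻¹ • x := by
    rw [← hw, _root_.map_inv, _root_.map_mul, mul_smul, inv_smul_smul]
  calc wordDist f x₀ (map f ℓ⁻¹ • x) ≤ norm w' := Nat.sInf_le ⟨w', hy, rfl⟩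
    _ < norm (ℓ * w') := hlt
    _ = wordDist f x₀ x := hmin

end WordDist

section Schreier

variable [MulAction (FreeGroup α) X]

/-- `t x` spells the path from `x₀` to `x` in a spanning tree of the Schreier graph whose edge out
of `x` leads to `ℓ⁻¹ • x`; `r` makes these paths finite. -/
structure IsSchreierTransversal (x₀ : X) (r : X → X → Prop) (t : X → FreeGroup α) : Prop where
  wellFounded : WellFounded r
  apply_basepoint : t x₀ = 1
  exists_letter : ∀ x ≠ x₀, ∃ ℓ, IsLetter ℓ ∧ r (ℓ⁻¹ • x) x ∧ t x = ℓ * t (ℓ⁻¹ • x)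

theorem exists_isSchreierTransversal (x₀ : X) {r : X → X → Prop}
    (hr : WellFounded r) (Y : Set X) (K : Subgroup (FreeGroup α))
    (h : ∀ x ≠ x₀, ∃ ℓ, IsLetter ℓ ∧ r (ℓ⁻¹ • x) x ∧ (x ∈ Y → ℓ ∈ K ∧ ℓ⁻¹ • x ∈ Y)) :
    ∃ t, IsSchreierTransversal x₀ r t ∧ ∀ x ∈ Y, t x ∈ K := by
  classical
  choose! ℓ hℓ using h
  let t : X → FreeGroup α := hr.fix fun x ih ↦
    if hx : x = x₀ then 1 else ℓ x * ih ((ℓ x)⁻¹ • x) (hℓ x hx).2.1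
  have ht₀ : t x₀ = 1 := by dsimp only [t]; rw [hr.fix_eq, dif_pos rfl]
  have ht : ∀ x ≠ x₀, t x = ℓ x * t ((ℓ x)⁻¹ • x) := fun x hx ↦ by
    dsimp only [t]; rw [hr.fix_eq, dif_neg hx]
  refine ⟨t, ⟨hr, ht₀, fun x hx ↦ ⟨ℓ x, (hℓ x hx).1, (hℓ x hx).2.1, ht x hx⟩⟩, fun x ↦ ?_⟩
  induction x using hr.induction with
  | _ x ih =>
    intro hx
    by_cases hx₀ : x = x₀
    · rw [hx₀, ht₀]
      exact one_mem K
    obtain ⟨hK, hY⟩ := (hℓ x hx₀).2.2 hx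
    rw [ht x hx₀]
    exact mul_mem hK (ih _ (hℓ x hx₀).2.1 hY)

def schreierGen (t : X → FreeGroup α) (p : α × X) : FreeGroup α :=
  (t p.2)⁻¹ * of p.1 * t ((of p.1)⁻¹ • p.2)

def SchreierEdge (t : X → FreeGroup α) : Type _ := {p : α × X // schreierGen t p ≠ 1}

def schreierHom (t : X → FreeGroup α) : FreeGroup (SchreierEdge t) →* FreeGroup α :=
  lift fun e ↦ schreierGen t e.1

theorem range_schreierHom_comp_map_subtypeVal (t : X → FreeGroup α) (P : α × X → Prop) :
    ((schreierHom t).comp (map (Subtype.val : {e : SchreierEdge t // P e.1} → _))).range =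
      closure (schreierGen t '' {p | P p}) := by
  have : (schreierHom t).comp (map Subtype.val) =
      lift fun e : {e : SchreierEdge t // P e.1} ↦ schreierGen t e.1.1 :=
    ext_hom _ _ fun _ ↦ rfl
  rw [this, range_lift_eq_closure]
  refine le_antisymm (closure_mono ?_) (closure_le _ |>.mpr ?_)
  · rintro _ ⟨e, rfl⟩
    exact ⟨e.1.1, e.2, rfl⟩
  · rintro _ ⟨p, hp, rfl⟩
    by_cases h : schreierGen t p = 1
    · rw [SetLike.mem_coe, h]
      exact one_mem _
    · exact subset_closure ⟨⟨⟨p, h⟩, hp⟩, rfl⟩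

theorem inv_transversal_mul_mul_mem_closure (t : X → FreeGroup α) (f : β → α) {Y : Set X}
    (hY : ∀ w, ∀ y ∈ Y, map f w • y ∈ Y) (w : FreeGroup β) :
    ∀ z ∈ Y, (t (map f w • z))⁻¹ * map f w * t z ∈
      closure (schreierGen t '' {p | p.1 ∈ Set.range f ∧ p.2 ∈ Y}) := by
  induction w using FreeGroup.induction_on with
  | C1 => simp
  | of b =>
    intro z hz
    have hb := hY (of b) z hz
    rw [map.of] at hb ⊢
    have hp : (f b, of (f b) • z) ∈ {p : α × X | p.1 ∈ Set.range f ∧ p.2 ∈ Y} := ⟨⟨b, rfl⟩, hb⟩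
    convert subset_closure (Set.mem_image_of_mem (schreierGen t) hp) using 1
    simp [schreierGen]
  | inv_of b ih =>
    intro z hz
    have hb := hY (of b)⁻¹ z hz
    rw [_root_.map_inv, map.of] at hb ⊢
    have := inv_mem (ih _ hb)
    rw [map.of, smul_inv_smul] at this
    simpa [mul_assoc] using this
  | mul u v ihu ihv =>
    intro z hz
    have := mul_mem (ihu _ (hY v z hz)) (ihv z hz)
    simpa [mul_smul, mul_assoc] using this

variable {x₀ : X} {r : X → X → Prop} {t : X → FreeGroup α}

namespace IsSchreierTransversal

variable (ht : IsSchreierTransversal x₀ r t)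
include ht

theorem smul_basepoint (x : X) : t x • x₀ = x := by
  induction x using ht.wellFounded.induction with
  | _ x ih =>
    by_cases hx : x = x₀
    · rw [hx, ht.apply_basepoint, one_smul]
    · obtain ⟨ℓ, -, hr, hℓ⟩ := ht.exists_letter x hx
      rw [hℓ, mul_smul, ih _ hr, smul_inv_smul]

theorem schreierGen_mem_stabilizer (p : α × X) :
    schreierGen t p ∈ stabilizer (FreeGroup α) x₀ := by
  simp [schreierGen, mul_smul, ht.smul_basepoint, inv_smul_eq_iff]

theorem schreierHom_mem_stabilizer (w : FreeGroup (SchreierEdge t)) :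
    schreierHom t w ∈ stabilizer (FreeGroup α) x₀ :=
  range_lift_le (by rintro _ ⟨e, rfl⟩; exact ht.schreierGen_mem_stabilizer e.1) ⟨w, rfl⟩

theorem stabilizer_inf_range_map_le (f : β → α) {Y : Set X}
    (hY : ∀ w, ∀ y ∈ Y, map f w • y ∈ Y) (hx₀ : x₀ ∈ Y) :
    stabilizer (FreeGroup α) x₀ ⊓ (map f).range ≤
      closure (schreierGen t '' {p | p.1 ∈ Set.range f ∧ p.2 ∈ Y}) := by
  rintro _ ⟨hg, w, rfl⟩
  have := inv_transversal_mul_mul_mem_closure t f hY w x₀ hx₀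
  rwa [mem_stabilizer_iff.mp hg, ht.apply_basepoint, inv_one, one_mul, mul_one] at this

theorem range_schreierHom : (schreierHom t).range = stabilizer (FreeGroup α) x₀ := by
  refine le_antisymm (fun _ ⟨w, hw⟩ ↦ hw ▸ ht.schreierHom_mem_stabilizer w) ?_
  calc stabilizer (FreeGroup α) x₀
      = stabilizer (FreeGroup α) x₀ ⊓ (map id).range := by
        rw [MonoidHom.range_eq_top.mpr fun w ↦ ⟨w, map.id w⟩, inf_top_eq]
    _ ≤ closure (schreierGen t '' {p | p.1 ∈ Set.range id ∧ p.2 ∈ Set.univ}) :=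
        ht.stabilizer_inf_range_map_le id (fun _ _ _ ↦ trivial) trivial
    _ = ((schreierHom t).comp (map Subtype.val)).range :=
        (range_schreierHom_comp_map_subtypeVal t _).symm
    _ ≤ (schreierHom t).range := by
        rw [MonoidHom.range_comp]; exact map_le_range _ _

end IsSchreierTransversal

section Rewriting

attribute [local instance] arrowAction arrowMulDistribMulAction

open scoped Classical in
noncomputable def edgeLetter (t : X → FreeGroup α) (a : α) (x : X) :
    FreeGroup (SchreierEdge t) :=
  if h : schreierGen t (a, x) = 1 then 1 else of ⟨(a, x), h⟩

/-- The Reidemeister–Schreier rewriting process: `(schreierRewriting t g).left x` is `g`, read from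
the coset `x`, rewritten as a word in the Schreier generators. -/
noncomputable def schreierRewriting (t : X → FreeGroup α) :
    FreeGroup α →*
      (X → FreeGroup (SchreierEdge t)) ⋊[MulDistribMulAction.toMulAut _ _] FreeGroup α :=
  lift fun a ↦ ⟨edgeLetter t a, of a⟩

variable (t) in
theorem schreierRewriting_right (g : FreeGroup α) : (schreierRewriting t g).right = g := by
  have : SemidirectProduct.rightHom.comp (schreierRewriting t) = .id _ :=
    ext_hom _ _ fun _ ↦ rfl
  exact DFunLike.congr_fun this g

variable (t) in
theorem schreierRewriting_mul_left (g h : FreeGroup α) (x : X) :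
    (schreierRewriting t (g * h)).left x =
      (schreierRewriting t g).left x * (schreierRewriting t h).left (g⁻¹ • x) := by
  rw [_root_.map_mul, SemidirectProduct.mul_left, schreierRewriting_right]
  rfl

variable (t) in
theorem schreierRewriting_inv_left (g : FreeGroup α) (x : X) :
    (schreierRewriting t g⁻¹).left x = ((schreierRewriting t g).left (g • x))⁻¹ := by
  have h := schreierRewriting_mul_left t g⁻¹ g x
  rw [inv_mul_cancel, _root_.map_one, inv_inv] at h
  exact eq_inv_of_mul_eq_one_left h.symm

variable (t) in
theorem schreierRewriting_of_left (a : α) : (schreierRewriting t (of a)).left = edgeLetter t a :=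
  congrArg SemidirectProduct.left (lift_apply_of)

namespace IsSchreierTransversal

variable (ht : IsSchreierTransversal x₀ r t)
include ht

theorem schreierRewriting_transversal_left (x : X) :
    (schreierRewriting t (t x)).left x = 1 := by
  induction x using ht.wellFounded.induction with
  | _ x ih =>
    by_cases hx : x = x₀
    · rw [hx, ht.apply_basepoint, _root_.map_one]; rfl
    obtain ⟨ℓ, ⟨a, rfl | rfl⟩, hr, hℓ⟩ := ht.exists_letter x hx
    · rw [hℓ, schreierRewriting_mul_left, ih _ hr, mul_one, schreierRewriting_of_left,
        edgeLetter, dif_pos (by simp [schreierGen, hℓ])]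
    · rw [hℓ, schreierRewriting_mul_left, ih _ hr, mul_one, schreierRewriting_inv_left,
        schreierRewriting_of_left, edgeLetter, dif_pos, inv_one]
      simp [schreierGen, hℓ]

theorem schreierRewriting_schreierGen_left (p : α × X) :
    (schreierRewriting t (schreierGen t p)).left x₀ = edgeLetter t p.1 p.2 := by
  rw [schreierGen, mul_assoc, schreierRewriting_mul_left, schreierRewriting_inv_left, inv_inv,
    ht.smul_basepoint, ht.schreierRewriting_transversal_left, inv_one, one_mul,
    schreierRewriting_mul_left, schreierRewriting_of_left, ht.schreierRewriting_transversal_left,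
    mul_one]

end IsSchreierTransversal

variable (t x₀) in
noncomputable def schreierRetraction :
    stabilizer (FreeGroup α) x₀ →* FreeGroup (SchreierEdge t) :=
  MonoidHom.mk' (fun g ↦ (schreierRewriting t g).left x₀) fun g h ↦ by
    rw [Subgroup.coe_mul, schreierRewriting_mul_left, inv_smul_eq_iff.mpr g.2.symm]

theorem IsSchreierTransversal.injective_schreierHom (ht : IsSchreierTransversal x₀ r t) :
    Injective (schreierHom t) := by
  let ι := (schreierHom t).codRestrict _ ht.schreierHom_mem_stabilizer
  have hι : LeftInverse (schreierRetraction x₀ t) ι := fun e ↦ by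
    induction e using FreeGroup.induction_on with
    | C1 => rw [_root_.map_one, _root_.map_one]
    | of e =>
      change (schreierRewriting t (schreierHom t (of e))).left x₀ = of e
      rw [schreierHom, lift_apply_of, ht.schreierRewriting_schreierGen_left, edgeLetter,
        dif_neg e.2]
      rfl
    | inv_of e ih => rw [_root_.map_inv, _root_.map_inv, ih]
    | mul u v hu hv => rw [_root_.map_mul, _root_.map_mul, hu, hv]
  exact fun a b hab ↦ hι.injective (Subtype.ext hab)

end Rewriting

end Schreier

section Adapted

variable [MulAction (FreeGroup α) X] (f : β → α) (x₀ : X)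

/-- Points of `mapOrbit f x₀` are ranked below all others, so that a spanning tree decreasing the
rank reaches them from `x₀` through letters `f b` only. -/
noncomputable def adaptedRank (x : X) : ℕ ×ₗ ℕ :=
  open scoped Classical in
  if x ∈ mapOrbit f x₀ then toLex (0, wordDist f x₀ x)
  else toLex (1, wordDist (id : α → α) x₀ x)

theorem exists_isLetter_adaptedRank_lt [IsPretransitive (FreeGroup α) X] {x : X}
    (hx : x ≠ x₀) :
    ∃ ℓ, IsLetter ℓ ∧ adaptedRank f x₀ (ℓ⁻¹ • x) < adaptedRank f x₀ x ∧
      (x ∈ mapOrbit f x₀ → ℓ ∈ (map f).range ∧ ℓ⁻¹ • x ∈ mapOrbit f x₀) := by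
  by_cases hxA : x ∈ mapOrbit f x₀
  · obtain ⟨ℓ, hℓ, hlt⟩ := exists_isLetter_wordDist_lt f x₀ hxA hx
    have hyA := smul_mem_mapOrbit f x₀ hxA ℓ⁻¹
    rw [_root_.map_inv] at hyA hlt
    refine ⟨map f ℓ, hℓ.map f, ?_, fun _ ↦ ⟨⟨ℓ, rfl⟩, hyA⟩⟩
    simp only [adaptedRank, if_pos hxA, if_pos hyA]
    exact Prod.Lex.toLex_lt_toLex.mpr (.inr ⟨rfl, hlt⟩)
  · obtain ⟨g, hg⟩ := exists_smul_eq (FreeGroup α) x₀ x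
    obtain ⟨ℓ, hℓ, hlt⟩ := exists_isLetter_wordDist_lt id x₀ ⟨g, by simp only [map.id, hg]⟩ hx
    rw [map.id] at hlt
    refine ⟨ℓ, hℓ, ?_, fun h ↦ absurd h hxA⟩
    simp only [adaptedRank, if_neg hxA]
    split_ifs
    · exact Prod.Lex.toLex_lt_toLex.mpr (.inl zero_lt_one)
    · exact Prod.Lex.toLex_lt_toLex.mpr (.inr ⟨rfl, hlt⟩)

theorem range_map_inf_stabilizer_isFreeFactorOf [IsPretransitive (FreeGroup α) X] :
    IsFreeFactorOf ((map f).range ⊓ stabilizer _ x₀) (stabilizer (FreeGroup α) x₀) := by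
  obtain ⟨t, ht, htA⟩ := exists_isSchreierTransversal x₀ (InvImage.wf (adaptedRank f x₀)
    wellFounded_lt) (mapOrbit f x₀) _ fun x hx ↦ exists_isLetter_adaptedRank_lt f x₀ hx
  have hA : closure (schreierGen t '' {p | p.1 ∈ Set.range f ∧ p.2 ∈ mapOrbit f x₀}) =
      (map f).range ⊓ stabilizer _ x₀ := by
    refine le_antisymm (closure_le _ |>.mpr ?_) ?_
    · rintro _ ⟨⟨_, z⟩, ⟨⟨b, rfl⟩, hz⟩, rfl⟩
      refine ⟨?_, ht.schreierGen_mem_stabilizer _⟩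
      have hz' := smul_mem_mapOrbit f x₀ hz (of b)⁻¹
      rw [_root_.map_inv, map.of] at hz'
      exact Subgroup.mul_mem _
        (Subgroup.mul_mem _ (Subgroup.inv_mem _ (htA z hz)) ⟨of b, map.of⟩) (htA _ hz')
    · rw [inf_comm]
      exact ht.stabilizer_inf_range_map_le f (fun w _ hy ↦ smul_mem_mapOrbit _ _ hy w)
        ⟨1, by simp only [_root_.map_one, one_smul]⟩
  rw [← hA, ← ht.range_schreierHom, ← range_schreierHom_comp_map_subtypeVal]
  exact isFreeFactorOf_range_comp_map_subtypeVal _ ht.injective_schreierHom _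

end Adapted

end FreeGroup

universe u

theorem IsFreeFactorOf.exists_mulEquiv_freeGroup_sum {G : Type u} [Group G] [IsFreeGroup G]
    {F : Subgroup G} (h : IsFreeFactorOf F ⊤) :
    ∃ (S T : Type u) (e : FreeGroup (S ⊕ T) ≃* G),
      (FreeGroup.map Sum.inl).range.map e.toMonoidHom = F := by
  obtain ⟨hF, K, hK, hbij⟩ := h
  let eF := (IsFreeGroup.toFreeGroup F).symm
  let eK := (IsFreeGroup.toFreeGroup K).symm
  let e : FreeGroup (_ ⊕ _) ≃* G := FreeGroup.sumEquivCoprod.trans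
    ((MulEquiv.coprodCongr eF eK).trans ((MulEquiv.ofBijective _ hbij).trans Subgroup.topEquiv))
  have he : e.toMonoidHom.comp (FreeGroup.map Sum.inl) = F.subtype.comp eF.toMonoidHom :=
    FreeGroup.ext_hom _ _ fun _ ↦ rfl
  refine ⟨_, _, e, ?_⟩
  rw [MonoidHom.map_range, he, MonoidHom.range_comp, MonoidHom.range_eq_top.mpr eF.surjective,
    ← MonoidHom.range_eq_map, Subgroup.range_subtype]

theorem IsFreeFactorOf.inf_of_top {G : Type u} [Group G] [IsFreeGroup G] {F : Subgroup G}
    (hF : IsFreeFactorOf F ⊤) (H : Subgroup G) : IsFreeFactorOf (F ⊓ H) H := by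
  obtain ⟨S, T, e, he⟩ := hF.exists_mulEquiv_freeGroup_sum
  have h := (FreeGroup.range_map_inf_stabilizer_isFreeFactorOf Sum.inl
    ((1 : FreeGroup (S ⊕ T)) : FreeGroup (S ⊕ T) ⧸ H.comap e.toMonoidHom)).map
      e.toMonoidHom e.injective
  rwa [stabilizer_quotient, map_inf _ _ _ e.injective, he,
    map_comap_eq_self_of_surjective e.surjective] at h

/-- The intersection of two free factors of a finitely generated free group is a free factor
of each of them. -/
theorem inf_isFreeFactorOf {N : ℕ} (F F' : Subgroup (FreeGroup (Fin N)))
    (h : IsFreeFactorOf F ⊤) (h' : IsFreeFactorOf F' ⊤) :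
    IsFreeFactorOf (F ⊓ F') F ∧ IsFreeFactorOf (F ⊓ F') F' :=
  ⟨inf_comm F' F ▸ h'.inf_of_top F, h.inf_of_top F'⟩
end

section
/- Let T be an R-tree with an isometric action of F_N that is mixing. If T is not indecomposable, then every transverse covering of T consists of exactly one F_N-orbit of subtrees. -/
open Pointwise

/-- Mixing: every arc `J` is covered by finitely many translates of any given arc `I`. -/
def IsMixing (G : Type*) (T : Type*) [Group G] [MulAction G T] [MetricSpace T] : Prop :=
  ∀ I J : Set T, IsArc I → IsArc J → ∃ (r : ℕ) (g : Fin r → G), J ⊆ ⋃ i, g i • I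

/-- Indecomposable: mixing, with the covering translates forming a chain in which
consecutive translates overlap in a nondegenerate set. -/
def IsIndecomposable (G : Type*) (T : Type*) [Group G] [MulAction G T] [MetricSpace T] : Prop :=
  ∀ I J : Set T, IsArc I → IsArc J →
    ∃ (r : ℕ) (g : Fin (r + 1) → G), J ⊆ ⋃ i, g i • I ∧
      ∀ i : Fin r, ¬(g i.castSucc • I ∩ g i.succ • I).Subsingleton

/-- A transverse covering: a transverse family of closed subtrees such that every arc of `T`
is covered by finitely many members. -/
structure IsTransverseCovering (G : Type*) {T : Type*} [Group G] [MulAction G T]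
    [MetricSpace T] (F : Set (Set T)) extends IsTransverseFamily G F : Prop where
  closed : ∀ Y ∈ F, IsClosed Y
  covers : ∀ A : Set T, IsArc A →
    ∃ (r : ℕ) (Ys : Fin r → Set T), (∀ i, Ys i ∈ F) ∧ A ⊆ ⋃ i, Ys i

/-! Mixing lets translates of an arc in `Y` cover an arc in `Y'`, so these translates of `Y`
meet `Y'` in infinitely many points altogether. As distinct members of a transverse family meet
in at most one point, some translate of `Y` must equal `Y'`. -/

theorem IsArc.infinite {T : Type*} [MetricSpace T] {A : Set T} (hA : IsArc A) : A.Infinite := by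
  obtain ⟨a, b, f, hab, hf, rfl⟩ := hA
  refine (Set.Icc_infinite hab).image fun s hs t ht hst => ?_
  have h := hf s hs t ht
  rw [hst, dist_self, eq_comm, abs_eq_zero, sub_eq_zero] at h
  exact h

theorem image_Icc_subset_seg {T : Type*} [MetricSpace T] {x y : T} {f : ℝ → T}
    (hf0 : f 0 = x) (hfd : f (dist x y) = y)
    (hf : ∀ s ∈ Set.Icc (0 : ℝ) (dist x y), ∀ t ∈ Set.Icc (0 : ℝ) (dist x y),
      dist (f s) (f t) = |s - t|) :
    f '' Set.Icc 0 (dist x y) ⊆ seg x y := by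
  rintro _ ⟨s, hs, rfl⟩
  have h0 : (0 : ℝ) ∈ Set.Icc 0 (dist x y) := ⟨le_rfl, dist_nonneg⟩
  have hd : dist x y ∈ Set.Icc 0 (dist x y) := ⟨dist_nonneg, le_rfl⟩
  have hxs : dist x (f s) = |0 - s| := hf0 ▸ hf 0 h0 s hs
  have hsy : dist (f s) y = |s - dist x y| := by simpa only [hfd] using hf s hs _ hd
  change dist x (f s) + dist (f s) y = dist x y
  rw [hxs, hsy, abs_of_nonpos (by linarith [hs.1]), abs_of_nonpos (by linarith [hs.2])]
  ring

theorem IsSubtree.exists_isArc_subset {T : Type*} [MetricSpace T] (hT : IsRTree T)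
    {Y : Set T} (hY : IsSubtree Y) (hne : ¬Y.Subsingleton) : ∃ I : Set T, IsArc I ∧ I ⊆ Y := by
  obtain ⟨x, hx, y, hy, hxy⟩ := Set.not_subsingleton_iff.mp hne
  obtain ⟨f, hf0, hfd, hf⟩ := hT.1 x y
  exact ⟨_, ⟨0, dist x y, f, dist_pos.mpr hxy, hf, rfl⟩,
    (image_Icc_subset_seg hf0 hfd hf).trans (hY x hx y hy)⟩

theorem IsTransverseFamily.exists_smul_eq_of_isMixing {G T : Type*} [Group G] [MetricSpace T]
    [MulAction G T] (hT : IsRTree T) (hmix : IsMixing G T) {F : Set (Set T)}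
    (hF : IsTransverseFamily G F) {Y Y' : Set T} (hY : Y ∈ F) (hY' : Y' ∈ F) :
    ∃ g : G, g • Y = Y' := by
  obtain ⟨I, hI, hIY⟩ := (hF.subtree Y hY).exists_isArc_subset hT (hF.nondeg Y hY)
  obtain ⟨J, hJ, hJY'⟩ := (hF.subtree Y' hY').exists_isArc_subset hT (hF.nondeg Y' hY')
  obtain ⟨r, g, hJcov⟩ := hmix I J hI hJ
  by_contra! hne
  have hJsub : J ⊆ ⋃ i, g i • Y ∩ Y' := fun z hz =>
    have ⟨i, hzi⟩ := Set.mem_iUnion.mp (hJcov hz)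
    Set.mem_iUnion.mpr ⟨i, Set.smul_set_mono hIY hzi, hJY' hz⟩
  have hfin : (⋃ i, g i • Y ∩ Y').Finite := Set.finite_iUnion fun i =>
    (hF.transverse _ (hF.invariant (g i) Y hY) Y' hY' (hne (g i))).finite
  exact hJ.infinite (hfin.subset hJsub)

theorem transverseCovering_single_orbit_of_mixing_not_indecomposable_general
    {T : Type*} [MetricSpace T] {N : ℕ} [MulAction (FreeGroup (Fin N)) T]
    (hT : IsRTree T)
    (hmix : IsMixing (FreeGroup (Fin N)) T) :
    ∀ F : Set (Set T), IsTransverseCovering (FreeGroup (Fin N)) F →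
      ∀ Y ∈ F, ∀ Y' ∈ F, ∃ g : FreeGroup (Fin N), g • Y = Y' :=
  fun _ hF _ hY _ hY' => hF.toIsTransverseFamily.exists_smul_eq_of_isMixing hT hmix hY hY'

/-- If a mixing `F_N`-tree is not indecomposable, then every transverse covering of it
consists of exactly one `F_N`-orbit of subtrees. -/
theorem transverseCovering_single_orbit_of_mixing_not_indecomposable
    {T : Type*} [MetricSpace T] {N : ℕ} [MulAction (FreeGroup (Fin N)) T]
    (hT : IsRTree T) (hiso : ∀ g : FreeGroup (Fin N), Isometry fun x : T => g • x)
    (hmix : IsMixing (FreeGroup (Fin N)) T)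
    (hnotind : ¬IsIndecomposable (FreeGroup (Fin N)) T) :
    ∀ F : Set (Set T), IsTransverseCovering (FreeGroup (Fin N)) F →
      ∀ Y ∈ F, ∀ Y' ∈ F, ∃ g : FreeGroup (Fin N), g • Y = Y' :=
  transverseCovering_single_orbit_of_mixing_not_indecomposable_general hT hmix
end

section
/- Let T be an R-tree with an isometric action of a group G, and let Y = {Y_v} be a transverse covering of T. Define the skeleton S as the bipartite graph whose vertex set is Y together with the set of attaching points (points lying in at least two distinct members of Y), with an edge between an attaching point x and a subtree Y ∈ Y whenever x ∈ Y. Then S is a simplicial tree (connected and with no cycles), and the stabilizer of the edge (x, Y) is Stab(x) ∩ Stab(Y). -/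
open Pointwise

/-- The attaching points of a transverse covering: points lying in two distinct members. -/
def IsAttachingPoint {T : Type*} [MetricSpace T] (F : Set (Set T)) (x : T) : Prop :=
  ∃ Y ∈ F, ∃ Y' ∈ F, Y ≠ Y' ∧ x ∈ Y ∩ Y'

/-- The skeleton of a transverse covering: the bipartite graph on members of the covering and
attaching points, with an edge whenever the point lies in the subtree. -/
def skeletonGraph {T : Type*} [MetricSpace T] (F : Set (Set T)) :
    SimpleGraph ((↥F) ⊕ {x : T // IsAttachingPoint F x}) :=
  SimpleGraph.fromRel fun a b =>
    match a, b with
    | Sum.inl Y, Sum.inr x => (x : T) ∈ (Y : Set T)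
    | _, _ => False

/-!
A path `x₀, Y₁, x₁, …, Yₙ, xₙ` in the skeleton follows a geodesic of `T`: the distinct subtrees
`Yᵢ` and `Yᵢ₊₁` meet only in `xᵢ`, which forces `xᵢ` onto the segment `[xᵢ₋₁, xᵢ₊₁]`, and the
four-point condition concatenates these segments, so `x₁ ∈ [x₀, xₙ]`. Closing the path into a
cycle (`xₙ = x₀ ∈ Y₁`) would put `x₁ ≠ x₀` on the degenerate segment `[x₀, x₀]`.
For connectedness, an arc from a point of `Y` to a point of `Z` is covered by finitely many
closed members of the covering, and since the arc is connected, overlapping members chain `Y`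
to `Z`.
-/

section RTree

variable {T : Type*} [MetricSpace T]

lemma seg_self (x : T) : seg x x = {x} := by
  ext z
  simp only [seg, dist_self, Set.mem_ofPred_eq, Set.mem_singleton_iff]
  refine ⟨fun h => dist_eq_zero.mp ?_, fun h => by simp [h]⟩
  linarith [dist_nonneg (x := x) (y := z), dist_nonneg (x := z) (y := x), dist_comm x z]

lemma IsRTree.exists_mem_seg_dist_eq (hT : IsRTree T) (x y : T) {t : ℝ} (ht₀ : 0 ≤ t)
    (ht : t ≤ dist x y) : ∃ p ∈ seg x y, dist x p = t := by
  obtain ⟨f, hf₀, hf₁, hf⟩ := hT.1 x y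
  have h₀ : (0 : ℝ) ∈ Set.Icc 0 (dist x y) := ⟨le_rfl, dist_nonneg⟩
  have h₁ : dist x y ∈ Set.Icc 0 (dist x y) := ⟨dist_nonneg, le_rfl⟩
  have hxp : dist x (f t) = t := by
    rw [← hf₀, hf 0 h₀ t ⟨ht₀, ht⟩, zero_sub, abs_neg, abs_of_nonneg ht₀]
  have hpy : dist (f t) y = dist x y - t := by
    rw [← hf₁, hf t ⟨ht₀, ht⟩ _ h₁, hf₁, abs_sub_comm, abs_of_nonneg (by linarith)]
  exact ⟨f t, show _ = _ by rw [hxp, hpy]; ring, hxp⟩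

lemma IsRTree.exists_isArc_isPreconnected (hT : IsRTree T) {x y : T} (hxy : x ≠ y) :
    ∃ A : Set T, IsArc A ∧ IsPreconnected A ∧ x ∈ A ∧ y ∈ A := by
  obtain ⟨f, hf₀, hf₁, hf⟩ := hT.1 x y
  have hlip : LipschitzOnWith 1 f (Set.Icc 0 (dist x y)) :=
    LipschitzOnWith.of_dist_le_mul fun s hs t ht => by
      rw [hf s hs t ht, Real.dist_eq, NNReal.coe_one, one_mul]
  exact ⟨f '' Set.Icc 0 (dist x y), ⟨0, dist x y, f, dist_pos.mpr hxy, hf, rfl⟩,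
    isPreconnected_Icc.image f hlip.continuousOn, ⟨0, ⟨le_rfl, dist_nonneg⟩, hf₀⟩,
    ⟨dist x y, ⟨dist_nonneg, le_rfl⟩, hf₁⟩⟩

lemma mem_seg_of_mem_seg_of_mem_seg
    (h4 : ∀ x y z w : T, dist x y + dist z w ≤ max (dist x z + dist y w) (dist x w + dist y z))
    {a b c d : T} (hb : b ∈ seg a c) (hc : c ∈ seg b d) (hbc : b ≠ c) : b ∈ seg a d := by
  have hpos : 0 < dist b c := dist_pos.mpr hbc
  have := h4 a c b d
  simp only [seg, Set.mem_ofPred_eq] at hb hc ⊢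
  rw [dist_comm c b] at this
  refine le_antisymm ?_ (dist_triangle a b d)
  rcases le_max_iff.mp this with h | h <;> linarith

lemma mem_seg_of_two_mul_dist_le
    (h4 : ∀ x y z w : T, dist x y + dist z w ≤ max (dist x z + dist y w) (dist x w + dist y z))
    {x y z p : T} (hp : p ∈ seg z x) (h : 2 * dist z p ≤ dist z x + dist z y - dist x y) :
    p ∈ seg z y := by
  have := h4 p y z x
  simp only [seg, Set.mem_ofPred_eq] at hp ⊢
  rw [dist_comm p z, dist_comm y x, dist_comm y z] at this
  refine le_antisymm ?_ (dist_triangle z p y)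
  rcases le_max_iff.mp this with h' | h' <;> linarith

lemma IsRTree.mem_seg_of_mem_inter (hT : IsRTree T) {Y Y' : Set T} (hY : IsSubtree Y)
    (hY' : IsSubtree Y') (hYY' : (Y ∩ Y').Subsingleton) {x y z : T} (hx : x ∈ Y)
    (hz : z ∈ Y ∩ Y') (hy : y ∈ Y') : z ∈ seg x y := by
  obtain ⟨p, hp, hzp⟩ := hT.exists_mem_seg_dist_eq z x
    (t := (dist z x + dist z y - dist x y) / 2)
    (by linarith [dist_triangle x z y, dist_comm x z]) (by linarith [dist_triangle z x y])
  have hp' : p ∈ seg z y := mem_seg_of_two_mul_dist_le hT.2 hp (by linarith)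
  have hpz : p = z := hYY' ⟨hY z hz.1 x hx hp, hY' z hz.2 y hy hp'⟩ hz
  rw [hpz, dist_self] at hzp
  show _ = _
  linarith [dist_comm x z]

end RTree

theorem IsPreconnected.induction_of_closed_cover {X ι : Type*} [TopologicalSpace X] [Finite ι]
    {S : Set X} (hS : IsPreconnected S) {C : ι → Set X} (hC : ∀ i, IsClosed (C i))
    (hSC : S ⊆ ⋃ i, C i) (P : ι → Prop) (hP : ∀ i j, P i → (S ∩ C i ∩ C j).Nonempty → P j)
    {i j : ι} (hi : P i) (hiS : (S ∩ C i).Nonempty) (hjS : (S ∩ C j).Nonempty) : P j := by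
  have hcover : S ⊆ (⋃ k ∈ {k | P k}, C k) ∪ ⋃ k ∈ {k | ¬P k}, C k := by
    intro x hx
    obtain ⟨k, hk⟩ := Set.mem_iUnion.mp (hSC hx)
    by_cases hPk : P k
    exacts [Or.inl (Set.mem_biUnion hPk hk), Or.inr (Set.mem_biUnion hPk hk)]
  have hdisj : S ∩ ((⋃ k ∈ {k | P k}, C k) ∩ ⋃ k ∈ {k | ¬P k}, C k) = ∅ := by
    refine Set.eq_empty_of_forall_notMem fun x ⟨hx, hxP, hxnP⟩ => ?_
    obtain ⟨k, hk, hxk⟩ := Set.mem_iUnion₂.mp hxP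
    obtain ⟨l, hl, hxl⟩ := Set.mem_iUnion₂.mp hxnP
    exact hl (hP k l hk ⟨x, ⟨hx, hxk⟩, hxl⟩)
  have hclosed : ∀ s : Set ι, IsClosed (⋃ k ∈ s, C k) := fun s =>
    (Set.toFinite s).isClosed_biUnion fun k _ => hC k
  rcases isPreconnected_iff_subset_of_disjoint_closed.mp hS _ _ (hclosed _) (hclosed _)
    hcover hdisj with hSP | hSnP
  · obtain ⟨y, hy, hyj⟩ := hjS
    obtain ⟨k, hk, hyk⟩ := Set.mem_iUnion₂.mp (hSP hy)
    exact hP k j hk ⟨y, ⟨hy, hyk⟩, hyj⟩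
  · obtain ⟨x, hx, hxi⟩ := hiS
    obtain ⟨k, hk, hxk⟩ := Set.mem_iUnion₂.mp (hSnP hx)
    exact absurd (hP i k hi ⟨x, ⟨hx, hxi⟩, hxk⟩) hk

theorem MulAction.stabilizer_prod {G α β : Type*} [Group G] [MulAction G α] [MulAction G β]
    (a : α) (b : β) : stabilizer G (a, b) = stabilizer G a ⊓ stabilizer G b := by
  ext g
  simp [Prod.ext_iff]

namespace skeletonGraph

variable {T : Type*} [MetricSpace T] {F : Set (Set T)}

open SimpleGraph

def vertexSet (F : Set (Set T)) : F ⊕ {x : T // IsAttachingPoint F x} → Set T :=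
  Sum.elim (fun Y => Y) (fun x => {(x : T)})

@[simp]
lemma adj_inl_inr {Y : F} {x : {x : T // IsAttachingPoint F x}} :
    (skeletonGraph F).Adj (.inl Y) (.inr x) ↔ (x : T) ∈ (Y : Set T) := by
  simp [skeletonGraph]

lemma exists_eq_inl_of_adj {x : {x : T // IsAttachingPoint F x}}
    {u : F ⊕ {x : T // IsAttachingPoint F x}} (h : (skeletonGraph F).Adj (.inr x) u) :
    ∃ Y : F, u = .inl Y ∧ (x : T) ∈ (Y : Set T) := by
  cases u <;> simp_all [skeletonGraph]

lemma exists_eq_inr_of_adj {Y : F} {u : F ⊕ {x : T // IsAttachingPoint F x}}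
    (h : (skeletonGraph F).Adj (.inl Y) u) :
    ∃ x : {x : T // IsAttachingPoint F x}, u = .inr x ∧ (x : T) ∈ (Y : Set T) := by
  cases u <;> simp_all [skeletonGraph]

lemma reachable_of_mem_inter {Y Z : F} {w : T} (hwY : w ∈ (Y : Set T)) (hwZ : w ∈ (Z : Set T)) :
    (skeletonGraph F).Reachable (.inl Y) (.inl Z) := by
  by_cases hYZ : Y = Z
  · rw [hYZ]
  · have hw : IsAttachingPoint F w := ⟨Y, Y.2, Z, Z.2, Subtype.coe_ne_coe.mpr hYZ, hwY, hwZ⟩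
    exact (adj_inl_inr.mpr hwY).reachable.trans (adj_inl_inr (x := ⟨w, hw⟩).mpr hwZ).reachable.symm

variable {G : Type*} [Group G] [MulAction G T]

/- The path may start at either kind of vertex (with `x` a point of `Y₀` in that vertex's set),
so that the induction passes one edge at a time. -/
theorem mem_seg_of_isPath (hT : IsRTree T) (hF : IsTransverseFamily G F)
    {u : F ⊕ {x : T // IsAttachingPoint F x}} {y : {x : T // IsAttachingPoint F x}}
    (p : (skeletonGraph F).Walk u (.inr y)) (hp : p.IsPath) (Y₀ : F)
    (hY₀ : .inl Y₀ ∉ p.support) {x : T} (hxY₀ : x ∈ (Y₀ : Set T)) (hxu : x ∈ vertexSet F u)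
    {z : T} (hz : z ∈ (Y₀ : Set T)) : x ∈ seg z y := by
  generalize hv : Sum.inr y = v at p
  induction p generalizing Y₀ x z with
  | nil =>
    subst hv
    obtain rfl : x = y := hxu
    simp [seg]
  | @cons u w v h q ih =>
    have hq := hp.of_cons
    rw [Walk.support_cons, List.mem_cons, not_or] at hY₀
    cases u with
    | inr x' =>
      obtain ⟨Y₁, rfl, hx'Y₁⟩ := exists_eq_inl_of_adj h
      obtain rfl : x = x' := hxu
      exact ih Y₀ hxY₀ hx'Y₁ hz hv hq hY₀.2
    | inl Y₁ =>
      obtain ⟨x₁, rfl, hx₁Y₁⟩ := exists_eq_inr_of_adj h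
      by_cases hxx₁ : x = x₁
      · exact ih Y₀ hxY₀ hxx₁ hz hv hq hY₀.2
      have hY₁q : .inl Y₁ ∉ q.support := ((Walk.cons_isPath_iff h q).mp hp).2
      have hY₀Y₁ : (Y₀ : Set T) ≠ Y₁ := fun h => hY₀.1 (by rw [Subtype.ext h])
      have hx₁ : (x₁ : T) ∈ seg x y := ih Y₁ hx₁Y₁ rfl hxu hv hq hY₁q
      have hx : x ∈ seg z x₁ := hT.mem_seg_of_mem_inter (hF.subtree _ Y₀.2) (hF.subtree _ Y₁.2)
        (hF.transverse _ Y₀.2 _ Y₁.2 hY₀Y₁) hz ⟨hxY₀, hxu⟩ hx₁Y₁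
      exact mem_seg_of_mem_seg_of_mem_seg hT.2 hx hx₁ hxx₁

theorem not_isCycle_of_inr (hT : IsRTree T) (hF : IsTransverseFamily G F)
    {x₀ : {x : T // IsAttachingPoint F x}} (c : (skeletonGraph F).Walk (.inr x₀) (.inr x₀)) :
    ¬c.IsCycle := by
  intro hc
  cases c with
  | nil => exact Walk.not_isCycle_nil hc
  | cons h p =>
    obtain ⟨Y₁, rfl, hx₀Y₁⟩ := exists_eq_inl_of_adj h
    cases p with
    | cons h' q =>
      obtain ⟨x₁, rfl, hx₁Y₁⟩ := exists_eq_inr_of_adj h'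
      obtain ⟨hp, hedge⟩ := (Walk.cons_isCycle_iff _ h).mp hc
      obtain ⟨hq, hY₁q⟩ := (Walk.cons_isPath_iff h' q).mp hp
      have hx₁ : (x₁ : T) ∈ seg (x₀ : T) x₀ :=
        mem_seg_of_isPath hT hF q hq Y₁ hY₁q hx₁Y₁ rfl hx₀Y₁
      obtain rfl : x₁ = x₀ := Subtype.ext (by simpa [seg_self] using hx₁)
      simp at hedge

theorem isAcyclic (hT : IsRTree T) (hF : IsTransverseFamily G F) : (skeletonGraph F).IsAcyclic := by
  intro v c hc
  cases v with
  | inr x₀ => exact not_isCycle_of_inr hT hF c hc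
  | inl Y =>
    cases c with
    | nil => exact Walk.not_isCycle_nil hc
    | cons h p =>
      obtain ⟨x, rfl, -⟩ := exists_eq_inr_of_adj h
      classical
      exact not_isCycle_of_inr hT hF _ (hc.rotate (u := .inr x) (by simp))

theorem reachable_inl (hT : IsRTree T) (hF : IsTransverseCovering G F) (Y Z : F) :
    (skeletonGraph F).Reachable (.inl Y) (.inl Z) := by
  obtain ⟨p, hpY⟩ := (Set.not_subsingleton_iff.mp (hF.nondeg _ Y.2)).nonempty
  obtain ⟨q, hqZ, hqp⟩ := (Set.not_subsingleton_iff.mp (hF.nondeg _ Z.2)).exists_ne p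
  obtain ⟨A, hA, hAconn, hpA, hqA⟩ := hT.exists_isArc_isPreconnected hqp.symm
  obtain ⟨r, Ys, hYs, hAYs⟩ := hF.covers A hA
  obtain ⟨i, hpi⟩ := Set.mem_iUnion.mp (hAYs hpA)
  obtain ⟨j, hqj⟩ := Set.mem_iUnion.mp (hAYs hqA)
  have hj : (skeletonGraph F).Reachable (.inl Y) (.inl ⟨Ys j, hYs j⟩) :=
    hAconn.induction_of_closed_cover (fun k => hF.closed _ (hYs k)) hAYs
      (fun k => (skeletonGraph F).Reachable (.inl Y) (.inl ⟨Ys k, hYs k⟩))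
      (fun _ _ hk ⟨_, ⟨_, hwk⟩, hwl⟩ => hk.trans (reachable_of_mem_inter hwk hwl))
      (reachable_of_mem_inter hpY hpi) ⟨p, hpA, hpi⟩ ⟨q, hqA, hqj⟩
  exact hj.trans (reachable_of_mem_inter hqj hqZ)

theorem connected (hT : IsRTree T) (hF : IsTransverseCovering G F) {a b : T} (hab : a ≠ b) :
    (skeletonGraph F).Connected := by
  obtain ⟨A, hA, -, haA, -⟩ := hT.exists_isArc_isPreconnected hab
  obtain ⟨r, Ys, hYs, hAYs⟩ := hF.covers A hA
  obtain ⟨i, -⟩ := Set.mem_iUnion.mp (hAYs haA)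
  refine (connected_iff_exists_forall_reachable _).mpr ⟨.inl ⟨Ys i, hYs i⟩, ?_⟩
  rintro (Z | x)
  · exact reachable_inl hT hF _ Z
  · obtain ⟨Z, hZ, -, -, -, hxZ, -⟩ := x.2
    exact (reachable_inl hT hF _ ⟨Z, hZ⟩).trans (adj_inl_inr.mpr hxZ).reachable

end skeletonGraph

theorem skeleton_isTree_and_edge_stabilizer_general
    {T G : Type*} [MetricSpace T] [Group G] [MulAction G T]
    (hT : IsRTree T)
    (hnontriv : ∃ x y : T, x ≠ y)
    (F : Set (Set T)) (hF : IsTransverseCovering G F) :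
    (skeletonGraph F).IsTree ∧
      ∀ (x : T) (Y : Set T), Y ∈ F → x ∈ Y → IsAttachingPoint F x →
        MulAction.stabilizer G (x, Y) =
          MulAction.stabilizer G x ⊓ MulAction.stabilizer G Y := by
  obtain ⟨a, b, hab⟩ := hnontriv
  exact ⟨⟨skeletonGraph.connected hT hF hab, skeletonGraph.isAcyclic hT hF.toIsTransverseFamily⟩,
    fun x Y _ _ _ => MulAction.stabilizer_prod x Y⟩

/-- The skeleton of a transverse covering of a (nondegenerate) `ℝ`-tree is a simplicial tree,
and the stabilizer of an edge `(x, Y)` is `Stab(x) ∩ Stab(Y)`. -/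
theorem skeleton_isTree_and_edge_stabilizer
    {T G : Type*} [MetricSpace T] [Group G] [MulAction G T]
    (hT : IsRTree T) (hiso : ∀ g : G, Isometry fun x : T => g • x)
    (hnontriv : ∃ x y : T, x ≠ y)
    (F : Set (Set T)) (hF : IsTransverseCovering G F) :
    (skeletonGraph F).IsTree ∧
      ∀ (x : T) (Y : Set T), Y ∈ F → x ∈ Y → IsAttachingPoint F x →
        MulAction.stabilizer G (x, Y) =
          MulAction.stabilizer G x ⊓ MulAction.stabilizer G Y :=
  skeleton_isTree_and_edge_stabilizer_general hT hnontriv F hF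
end
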